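/- Let K be a number field and {α_i mod I_i}_{i=1}^k an exact covering system of O_K in which the ideals are not all equal. Then each modulus I_i occurs at least min{ G(I_i / (I_i + I_j)) : I_j ≠ I_i } times, where for an ideal I, G(I) = max{ N(𝔭^r) : 𝔭 prime, r ≥ 0, 𝔭^r ∣ I }. -/

import Mathlib

/-!
Fix `i`, let `t` be the number of `j` with `I j = I i`, and suppose `t < G (I i / (I i + I j))`
for every `I j ≠ I i`. Then each such `j` yields a prime power `𝔭 ^ r` with
`𝔭 ^ r * (I i + I j) ∣ I i` and `N (𝔭 ^ r) > t`, and we pick `δ 𝔭 ∈ I i / 𝔭 ^ r`, a group in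
which `I i` has index `N (𝔭 ^ r)`. Count, for each class `α j + I j`, how many points of the coset
`x + I i` it contains (modulo a common finite-index subideal), and take the alternating sum of
these counts over the corners `x = α i + ∑ 𝔭 ∈ S, δ 𝔭` of the box spanned by the `δ 𝔭`.
Summed over all `j` the counts are constant, so the total vanishes. For `I j ≠ I i` the count is
invariant under translation by `I i + I j ∋ δ 𝔭`, so that box sum vanishes too. The classes with
`I j = I i` are `t` cosets of `I i`; as `N (𝔭 ^ r) > t` and the quotients `(I i / 𝔭 ^ r) / I i`
for distinct primes are independent, the `δ 𝔭` can be chosen so that the only corner in one of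
these cosets is `α i` itself, which contributes a nonzero amount.
-/

open NumberField

/-- `GQuot A B` is `G (A / B)` for ideals `B ∣ A` of the ring of integers:
the largest norm of a prime power ideal `𝔭 ^ r` dividing the quotient ideal
`A / B`, i.e. with `𝔭 ^ r * B ∣ A`. -/
noncomputable def GQuot {K : Type*} [Field K] [NumberField K]
    (A B : Ideal (𝓞 K)) : ℕ :=
  sSup {m : ℕ | ∃ (𝔭 : Ideal (𝓞 K)) (r : ℕ), 𝔭.IsPrime ∧ 𝔭 ^ r * B ∣ A ∧
    m = (𝔭 ^ r).absNorm}

open Finset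

section AddCommGroup

variable {G ι κ : Type*} [AddCommGroup G]

theorem Finset.sum_powerset_neg_one_pow_card_smul_eq_zero_of_periodic {M : Type*}
    [AddCommGroup M] {P : Finset κ} {p : κ} (hp : p ∈ P) (δ : κ → G) {f : G → M}
    (hf : Function.Periodic f (δ p)) (x : G) :
    ∑ S ∈ P.powerset, (-1 : ℤ) ^ S.card • f (x + ∑ q ∈ S, δ q) = 0 := by
  classical
  rw [← insert_erase hp, sum_powerset_insert (notMem_erase p P), ← sum_add_distrib]
  refine sum_eq_zero fun S hS => ?_
  have hpS : p ∉ S := fun h => notMem_erase p P (mem_powerset.mp hS h)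
  rw [card_insert_of_notMem hpS, sum_insert hpS, pow_succ, add_left_comm, add_comm (δ p), hf]
  simp

theorem AddSubgroup.card_add_mem_of_mem_sup {K L : AddSubgroup G} {d : G} (hd : d ∈ K ⊔ L)
    (x : G) : Nat.card {h : K // x + d + h ∈ L} = Nat.card {h : K // x + h ∈ L} := by
  obtain ⟨u, hu, v, hv, rfl⟩ := AddSubgroup.mem_sup.mp hd
  refine Nat.card_congr (Equiv.subtypeEquiv (Equiv.addRight ⟨u, hu⟩) fun h => ?_)
  have : x + (u + v) + h = x + ↑(h + ⟨u, hu⟩ : K) + v := by push_cast; abel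
  rw [this, L.add_mem_cancel_right hv]
  rfl

theorem AddSubgroup.card_add_mem_self_of_mem {K : AddSubgroup G} {x : G} (hx : x ∈ K) :
    Nat.card {h : K // x + h ∈ K} = Nat.card K :=
  Nat.card_congr (Equiv.subtypeUnivEquiv fun h => K.add_mem hx h.2)

theorem AddSubgroup.card_add_mem_self_of_notMem {K : AddSubgroup G} {x : G} (hx : x ∉ K) :
    Nat.card {h : K // x + h ∈ K} = 0 :=
  have : IsEmpty {h : K // x + h ∈ K} := ⟨fun h => hx ((K.add_mem_cancel_right h.1.2).mp h.2)⟩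
  Nat.card_of_isEmpty

theorem AddSubgroup.exists_mem_forall_sub_notMem {H K : AddSubgroup G} (hHK : H ≤ K)
    (B : Finset G) (hB : B.card < H.relIndex K) :
    ∃ d ∈ K, ∀ b ∈ B, d - b ∉ H := by
  by_contra! hcov
  let f : {b : B // (b : G) ∈ K} → K ⧸ H.addSubgroupOf K := fun b => (⟨b, b.2⟩ : K)
  have hf : Function.Surjective f := by
    intro q
    induction q using QuotientAddGroup.induction_on with | H d => ?_
    obtain ⟨b, hb, hdb⟩ := hcov d d.2
    refine ⟨⟨⟨b, hb⟩, by simpa using K.sub_mem d.2 (hHK hdb)⟩, QuotientAddGroup.eq.mpr ?_⟩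
    simpa [AddSubgroup.mem_addSubgroupOf, neg_add_eq_sub] using hdb
  have := (Nat.card_le_card_of_surjective f hf).trans (Finite.card_subtype_le _)
  exact hB.not_ge (Nat.card_eq_finsetCard B ▸ this)

theorem QuotientAddGroup.mk_mem_map_mk'_iff {M H : AddSubgroup G} (hM : M ≤ H) {x : G} :
    (x : G ⧸ M) ∈ H.map (QuotientAddGroup.mk' M) ↔ x ∈ H := by
  rw [← QuotientAddGroup.mk'_apply, ← AddSubgroup.mem_comap, QuotientAddGroup.comap_map_mk',
    sup_of_le_right hM]

def IsExactCover (a : ι → G) (H : ι → AddSubgroup G) : Prop :=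
  ∀ x, ∃! s, x - a s ∈ H s

namespace IsExactCover

variable {a : ι → G} {H : ι → AddSubgroup G}

theorem eq_of_sub_mem (hcov : IsExactCover a H) {i s : ι} (h : a i - a s ∈ H s) : s = i :=
  (hcov (a i)).unique h (by simp)

theorem sum_card [Fintype ι] (hcov : IsExactCover a H) (K : AddSubgroup G) [Finite K] (x : G) :
    ∑ s, Nat.card {h : K // x - a s + h ∈ H s} = Nat.card K := by
  choose f hf hf_unique using fun h : K => hcov (x + h)
  rw [← Nat.card_congr (Equiv.sigmaFiberEquiv f), Nat.card_sigma]
  refine sum_congr rfl fun s _ => Nat.card_congr (Equiv.subtypeEquivRight fun h => ?_)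
  rw [sub_add_eq_add_sub]
  exact ⟨fun hs => (hf_unique h s hs).symm, fun hs => hs ▸ hf h⟩

theorem sum_powerset_card_of_eq [DecidableEq ι] (hcov : IsExactCover a H) {i s : ι}
    (hs : H s = H i) {P : Finset κ} (δ : κ → G) (hnear : ∀ S ⊆ P, a i + ∑ p ∈ S, δ p - a s ∈ H i → S = ∅) :
    ∑ S ∈ P.powerset, (-1 : ℤ) ^ S.card •
        (Nat.card {h : H i // a i + ∑ p ∈ S, δ p - a s + h ∈ H s} : ℤ) =
      if s = i then (Nat.card (H i) : ℤ) else 0 := by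
  classical
  have hterm : ∀ S ⊆ P, (Nat.card {h : H i // a i + ∑ p ∈ S, δ p - a s + h ∈ H s} : ℤ) =
      if S = ∅ ∧ s = i then (Nat.card (H i) : ℤ) else 0 := by
    intro S hS
    rw [hs]
    by_cases h : a i + ∑ p ∈ S, δ p - a s ∈ H i
    · obtain rfl := hnear S hS h
      have hsi : s = i := hcov.eq_of_sub_mem (by simpa [hs] using h)
      rw [AddSubgroup.card_add_mem_self_of_mem h, if_pos ⟨rfl, hsi⟩]
    · rw [AddSubgroup.card_add_mem_self_of_notMem h, if_neg, Nat.cast_zero]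
      rintro ⟨rfl, rfl⟩
      simp at h
  rw [sum_congr rfl fun S hS => by rw [hterm S (mem_powerset.mp hS)]]
  split_ifs with hsi
  · rw [sum_eq_single_of_mem ∅ (empty_mem_powerset P) fun S _ hS0 => by simp [hS0]]
    simp [hsi]
  · simp [hsi]

theorem false_of_box [Fintype ι] (hcov : IsExactCover a H) (i : ι) [Finite (H i)]
    {P : Finset κ} (hP : P.Nonempty) (δ : κ → G)
    (hfar : ∀ s, H s ≠ H i → ∃ p ∈ P, δ p ∈ H i ⊔ H s)
    (hnear : ∀ s, H s = H i → ∀ S ⊆ P, a i + ∑ p ∈ S, δ p - a s ∈ H i → S = ∅) : False := by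
  classical
  set n : ι → Finset κ → ℤ := fun s S =>
    Nat.card {h : H i // a i + ∑ p ∈ S, δ p - a s + h ∈ H s}
  have hbox : ∀ s, ∑ S ∈ P.powerset, (-1 : ℤ) ^ S.card • n s S =
      if s = i then (Nat.card (H i) : ℤ) else 0 := by
    intro s
    by_cases hs : H s = H i
    · exact hcov.sum_powerset_card_of_eq hs δ (hnear s hs)
    · obtain ⟨p, hp, hδ⟩ := hfar s hs
      rw [if_neg fun h : s = i => hs (h ▸ rfl)]
      refine sum_powerset_neg_one_pow_card_smul_eq_zero_of_periodic hp δ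
        (f := fun y => (Nat.card {h : H i // y - a s + h ∈ H s} : ℤ)) (fun y => ?_) (a i)
      simp only [add_sub_right_comm y, AddSubgroup.card_add_mem_of_mem_sup hδ]
  have hsum : ∀ S, ∑ s, n s S = Nat.card (H i) := fun S => by
    simp only [n]
    exact_mod_cast hcov.sum_card (H i) (a i + ∑ p ∈ S, δ p)
  have key : (0 : ℤ) = Nat.card (H i) := calc
    (0 : ℤ) = ∑ S ∈ P.powerset, (-1 : ℤ) ^ S.card • ∑ s, n s S := by
      simp only [hsum, ← sum_smul, sum_powerset_neg_one_pow_card_of_nonempty hP, zero_smul]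
    _ = ∑ s, ∑ S ∈ P.powerset, (-1 : ℤ) ^ S.card • n s S := by
      simp only [smul_sum]
      exact sum_comm
    _ = Nat.card (H i) := by
      rw [sum_congr rfl fun s _ => hbox s, sum_ite_eq' univ i, if_pos (mem_univ i)]
  exact Nat.card_pos.ne' (by exact_mod_cast key.symm)

theorem map_mk (hcov : IsExactCover a H) {M : AddSubgroup G} (hM : ∀ s, M ≤ H s) :
    IsExactCover (fun s => (a s : G ⧸ M)) (fun s => (H s).map (QuotientAddGroup.mk' M)) := by
  intro y
  induction y using QuotientAddGroup.induction_on with | H x => ?_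
  simp only [← QuotientAddGroup.mk_sub, QuotientAddGroup.mk_mem_map_mk'_iff (hM _)]
  exact hcov x

theorem false_of_box_of_finiteIndex [Fintype ι] (hcov : IsExactCover a H)
    [∀ s, (H s).FiniteIndex] (i : ι) {P : Finset κ} (hP : P.Nonempty) (δ : κ → G)
    (hfar : ∀ s, H s ≠ H i → ∃ p ∈ P, δ p ∈ H i ⊔ H s)
    (hnear : ∀ s, H s = H i → ∀ S ⊆ P, a i + ∑ p ∈ S, δ p - a s ∈ H i → S = ∅) : False := by
  set M := ⨅ s, H s
  have : M.FiniteIndex := AddSubgroup.finiteIndex_iInf inferInstance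
  have hM : ∀ s, M ≤ H s := iInf_le H
  have hmap_inj : ∀ s, (H s).map (QuotientAddGroup.mk' M) = (H i).map (QuotientAddGroup.mk' M) →
      H s = H i := fun s h => by
    simpa [QuotientAddGroup.comap_map_mk', sup_of_le_right (hM _)] using
      congrArg (AddSubgroup.comap (QuotientAddGroup.mk' M)) h
  refine (hcov.map_mk hM).false_of_box i hP (fun p => (δ p : G ⧸ M)) (fun s hs => ?_)
    (fun s hs S hS h => hnear s (hmap_inj s hs) S hS ?_)
  · obtain ⟨p, hp, hδp⟩ := hfar s fun h => hs (h ▸ rfl)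
    exact ⟨p, hp, AddSubgroup.map_sup (H i) (H s) (QuotientAddGroup.mk' M) ▸
      AddSubgroup.mem_map_of_mem _ hδp⟩
  · rwa [← QuotientAddGroup.mk_sum, ← QuotientAddGroup.mk_add, ← QuotientAddGroup.mk_sub,
      QuotientAddGroup.mk_mem_map_mk'_iff (hM i)] at h

end IsExactCover

end AddCommGroup

section Dedekind

variable {R : Type*} [CommRing R]

theorem Ideal.inf_le_of_mul_le_of_isCoprime {I Q C K J : Ideal R} (hQC : Q * C ≤ I)
    (hKJ : K * J ≤ I) (hQK : IsCoprime Q K) : C ⊓ J ≤ I := by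
  intro x ⟨hxC, hxJ⟩
  obtain ⟨q, hq, k, hk, hqk⟩ := Ideal.isCoprime_iff_exists.mp hQK
  rw [← one_mul x, ← hqk, add_mul]
  exact add_mem (hQC (Ideal.mul_mem_mul hq hxC)) (hKJ (Ideal.mul_mem_mul hk hxJ))

variable [IsDedekindDomain R]

theorem Ideal.mem_of_sum_mem_of_pairwise_isCoprime {κ : Type*} {I : Ideal R} (hI : I ≠ ⊥)
    {P : Finset κ} {Q C : κ → Ideal R} (hQC : ∀ p ∈ P, I = Q p * C p)
    (hQ : (P : Set κ).Pairwise fun p q => IsCoprime (Q p) (Q q)) {c : κ → R}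
    (hc : ∀ p ∈ P, c p ∈ C p) (hsum : ∑ p ∈ P, c p ∈ I) {p : κ} (hp : p ∈ P) : c p ∈ I := by
  classical
  have hQ0 : ∀ q ∈ P, Q q ≠ 0 := fun q hq h => hI (by rw [hQC q hq, h, zero_mul, Ideal.zero_eq_bot])
  obtain ⟨J, hJ⟩ : ∏ q ∈ P.erase p, Q q ∣ I :=
    prod_dvd_of_coprime (hQ.mono (coe_subset.mpr (erase_subset p P)))
      fun q hq => ⟨C q, hQC q (mem_of_mem_erase hq)⟩
  have hCJ : ∀ q ∈ P.erase p, C q ≤ J := fun q hq => by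
    refine Ideal.le_of_dvd ((mul_dvd_mul_iff_left (hQ0 q (mem_of_mem_erase hq))).mp ?_)
    rw [← hQC q (mem_of_mem_erase hq), hJ]
    exact mul_dvd_mul_right (dvd_prod_of_mem Q hq) J
  have hIJ : I ≤ J := hJ ▸ Ideal.mul_le_right
  have hcJ : c p ∈ J := by
    rw [← add_sub_cancel_right (c p) (∑ q ∈ P.erase p, c q), add_sum_erase P c hp]
    exact sub_mem (hIJ hsum)
      (Ideal.sum_mem _ fun q hq => hCJ q hq (hc q (mem_of_mem_erase hq)))
  have hcop : IsCoprime (Q p) (∏ q ∈ P.erase p, Q q) :=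
    IsCoprime.prod_right fun q hq => hQ hp (mem_of_mem_erase hq) (ne_of_mem_erase hq).symm
  exact Ideal.inf_le_of_mul_le_of_isCoprime (hQC p hp).ge hJ.ge hcop ⟨hc p hp, hcJ⟩

variable [Module.Free ℤ R] [Module.Finite ℤ R]

theorem Ideal.relIndex_eq_absNorm {I Q C : Ideal R} (hI : I ≠ ⊥) (h : I = Q * C) :
    I.toAddSubgroup.relIndex C.toAddSubgroup = absNorm Q := by
  have hC : absNorm C ≠ 0 := by
    rw [Ne, absNorm_eq_zero_iff]
    rintro rfl
    exact hI (by rw [h, Ideal.mul_bot])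
  have := AddSubgroup.relIndex_mul_index (Submodule.toAddSubgroup_mono (h ▸ Ideal.mul_le_right))
  rw [← absNorm_eq_index, ← absNorm_eq_index] at this
  apply mul_right_cancel₀ hC
  rw [this, h, map_mul]

theorem Ideal.exists_forall_sum_sub_notMem {κ : Type*} {I : Ideal R} (hI : I ≠ ⊥)
    {P : Finset κ} {Q C : κ → Ideal R} (hQC : ∀ p ∈ P, I = Q p * C p)
    (hQ : (P : Set κ).Pairwise fun p q => IsCoprime (Q p) (Q q))
    (E : Finset R) (hE : ∀ p ∈ P, E.card < absNorm (Q p)) :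
    ∃ δ : κ → R, (∀ p ∈ P, δ p ∈ C p) ∧
      ∀ S ⊆ P, ∀ e ∈ E, ∑ p ∈ S, δ p - e ∈ I → S = ∅ := by
  classical
  have hdecomp : ∀ e : R, ∃ b : κ → R,
      (∃ c : κ → R, (∀ p ∈ P, c p ∈ C p) ∧ ∑ p ∈ P, c p - e ∈ I) →
        (∀ p ∈ P, b p ∈ C p) ∧ ∑ p ∈ P, b p - e ∈ I := fun e => by
    by_cases h : ∃ c : κ → R, (∀ p ∈ P, c p ∈ C p) ∧ ∑ p ∈ P, c p - e ∈ I
    · exact ⟨h.choose, fun _ => h.choose_spec⟩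
    · exact ⟨0, fun h' => absurd h' h⟩
  -- `b e` decomposes `e` modulo `I` along the `C p` whenever possible; such a decomposition is
  -- unique modulo `I`, so a corner sum can only meet `e + I` if `δ p ≡ b e p` for some `p`.
  choose b hb using hdecomp
  have havoid : ∀ p ∈ P, ∃ d ∈ C p, ∀ e ∈ E, d - b e p ∉ I := fun p hp => by
    have hIC : I ≤ C p := hQC p hp ▸ Ideal.mul_le_right
    obtain ⟨d, hd, hdb⟩ := AddSubgroup.exists_mem_forall_sub_notMem
      (Submodule.toAddSubgroup_mono hIC) (E.image (b · p))
      (card_image_le.trans_lt (relIndex_eq_absNorm hI (hQC p hp) ▸ hE p hp))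
    exact ⟨d, hd, fun e he => hdb _ (mem_image_of_mem _ he)⟩
  choose! δ hδC hδb using havoid
  refine ⟨δ, hδC, fun S hS e he hSe => ?_⟩
  by_contra hS0
  obtain ⟨p, hpS⟩ := nonempty_iff_ne_empty.mpr hS0
  set c : κ → R := fun q => if q ∈ S then δ q else 0
  have hc : ∀ q ∈ P, c q ∈ C q := fun q hq => by
    by_cases hqS : q ∈ S <;> simp [c, hqS, hδC q hq]
  have hcsum : ∑ q ∈ P, c q = ∑ q ∈ S, δ q := by
    rw [sum_ite_mem, inter_eq_right.mpr hS]
  obtain ⟨hbC, hbe⟩ := hb e ⟨c, hc, hcsum ▸ hSe⟩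
  have hcb := mem_of_sum_mem_of_pairwise_isCoprime hI hQC hQ (c := c - b e)
    (fun q hq => sub_mem (hc q hq) (hbC q hq))
    (by simpa [sum_sub_distrib, hcsum] using sub_mem hSe hbe) (hS hpS)
  exact hδb p (hS hpS) e he (by simpa [c, hpS] using hcb)

theorem Ideal.exists_forall_sum_sub_notMem_of_isMaximal {I : Ideal R} (hI : I ≠ ⊥)
    {P : Finset (Ideal R)} (hP : ∀ p ∈ P, p.IsMaximal) (e : Ideal R → ℕ)
    (hdvd : ∀ p ∈ P, p ^ e p ∣ I) (E : Finset R) (hE : ∀ p ∈ P, E.card < absNorm (p ^ e p)) :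
    ∃ δ : Ideal R → R, (∀ p ∈ P, ∀ J, p ^ e p * J ∣ I → δ p ∈ J) ∧
      ∀ S ⊆ P, ∀ x ∈ E, ∑ p ∈ S, δ p - x ∈ I → S = ∅ := by
  choose! C hC using hdvd
  have hcop : (P : Set (Ideal R)).Pairwise fun p q => IsCoprime (p ^ e p) (q ^ e q) :=
    fun p hp q hq hpq => (Ideal.isCoprime_iff_sup_eq.mpr
      ((hP p hp).coprime_of_ne (hP q hq) hpq)).pow
  obtain ⟨δ, hδC, hsep⟩ := exists_forall_sum_sub_notMem hI hC hcop E hE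
  refine ⟨δ, fun p hp J hJ => ?_, hsep⟩
  have hpow : p ^ e p ≠ 0 := fun h0 => hI (by rw [hC p hp, h0, zero_mul, Ideal.zero_eq_bot])
  rw [hC p hp, mul_dvd_mul_iff_left hpow] at hJ
  exact Ideal.le_of_dvd hJ (hδC p hp)

end Dedekind

namespace NumberField

variable {K : Type*} [Field K] [NumberField K]

/-- Letting the exponent depend on `𝔭` and `t` only (not on the modulus it came from) makes the
powers `𝔭 ^ minExpAbsNormGt 𝔭 t` attached to distinct primes pairwise coprime. -/
noncomputable def minExpAbsNormGt (𝔭 : Ideal (𝓞 K)) (t : ℕ) : ℕ :=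
  sInf {r : ℕ | t < Ideal.absNorm (𝔭 ^ r)}

theorem minExpAbsNormGt_le {𝔭 : Ideal (𝓞 K)} {t r : ℕ} (h : t < Ideal.absNorm (𝔭 ^ r)) :
    minExpAbsNormGt 𝔭 t ≤ r :=
  Nat.sInf_le h

theorem lt_absNorm_pow_minExpAbsNormGt {𝔭 : Ideal (𝓞 K)} {t r : ℕ}
    (h : t < Ideal.absNorm (𝔭 ^ r)) : t < Ideal.absNorm (𝔭 ^ minExpAbsNormGt 𝔭 t) :=
  Nat.sInf_mem (s := {r | t < Ideal.absNorm (𝔭 ^ r)}) ⟨r, h⟩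

theorem exists_isMaximal_of_lt_GQuot {A B : Ideal (𝓞 K)} {t : ℕ} (ht : 1 ≤ t)
    (h : t < GQuot A B) :
    ∃ 𝔭 : Ideal (𝓞 K), 𝔭.IsMaximal ∧ 𝔭 ^ minExpAbsNormGt 𝔭 t * B ∣ A ∧
      t < Ideal.absNorm (𝔭 ^ minExpAbsNormGt 𝔭 t) := by
  have hne : {m : ℕ | ∃ (𝔭 : Ideal (𝓞 K)) (r : ℕ), 𝔭.IsPrime ∧ 𝔭 ^ r * B ∣ A ∧
      m = (𝔭 ^ r).absNorm}.Nonempty := by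
    by_contra h0
    rw [Set.not_nonempty_iff_eq_empty] at h0
    rw [GQuot, h0, csSup_empty] at h
    exact Nat.not_lt_zero t h
  obtain ⟨_, ⟨𝔭, r, h𝔭, hdvd, rfl⟩, hr⟩ := exists_lt_of_lt_csSup hne h
  have h𝔭0 : 𝔭 ≠ ⊥ := by
    rintro rfl
    cases r with
    | zero => rw [pow_zero, map_one] at hr; omega
    | succ r => rw [← Ideal.zero_eq_bot, zero_pow r.succ_ne_zero, map_zero] at hr; omega
  refine ⟨𝔭, h𝔭.isMaximal h𝔭0, ?_, lt_absNorm_pow_minExpAbsNormGt hr⟩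
  exact (mul_dvd_mul_right (pow_dvd_pow 𝔭 (minExpAbsNormGt_le hr)) B).trans hdvd

theorem exists_separating_box_of_lt_GQuot {ι : Type*} [Fintype ι] {I : ι → Ideal (𝓞 K)} {i : ι}
    (hI : I i ≠ ⊥) {t : ℕ} (ht : 1 ≤ t) (hfar : ∀ j, I j ≠ I i → t < GQuot (I i) (I i + I j))
    (E : Finset (𝓞 K)) (hE : E.card ≤ t) :
    ∃ (P : Finset (Ideal (𝓞 K))) (δ : Ideal (𝓞 K) → 𝓞 K),
      (∀ j, I j ≠ I i → ∃ p ∈ P, δ p ∈ I i ⊔ I j) ∧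
        ∀ S ⊆ P, ∀ x ∈ E, ∑ p ∈ S, δ p - x ∈ I i → S = ∅ := by
  classical
  choose! 𝔭 h𝔭 hdvd hnorm using fun j hj => exists_isMaximal_of_lt_GQuot ht (hfar j hj)
  set P := ({j | I j ≠ I i} : Finset ι).image 𝔭
  have hP : ∀ j, I j ≠ I i → 𝔭 j ∈ P := fun j hj => mem_image_of_mem 𝔭 (by simpa using hj)
  obtain ⟨δ, hδ, hsep⟩ := Ideal.exists_forall_sum_sub_notMem_of_isMaximal hI (P := P)
    (by simpa [P] using h𝔭) (minExpAbsNormGt · t)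
    (by simpa [P] using fun j hj => dvd_of_mul_right_dvd (hdvd j hj)) E
    (by simpa [P] using fun j hj => hE.trans_lt (hnorm j hj))
  exact ⟨P, δ, fun j hj => ⟨𝔭 j, hP j hj, hδ _ (hP j hj) _ (hdvd j hj)⟩, hsep⟩

end NumberField

theorem exact_cover_modulus_repeats_ideal_general {K : Type*} [Field K] [NumberField K]
    {k : ℕ} (α : Fin k → 𝓞 K) (I : Fin k → Ideal (𝓞 K))
    (hbot : ∀ i, I i ≠ ⊥)
    (hcover : ∀ x : 𝓞 K, ∃! i : Fin k, x - α i ∈ I i) :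
    ∀ i : Fin k,
      sInf {m : ℕ | ∃ j : Fin k, I j ≠ I i ∧ m = GQuot (I i) (I i + I j)} ≤
        Nat.card {j : Fin k // I j = I i} := by
  classical
  intro i
  by_contra! hlt
  have : Nonempty {j : Fin k // I j = I i} := ⟨⟨i, rfl⟩⟩
  obtain ⟨_, j₀, hj₀, -⟩ := Nat.nonempty_of_pos_sInf (Nat.zero_lt_of_lt hlt)
  set E := ({j | I j = I i} : Finset (Fin k)).image fun j => α j - α i
  have hE : E.card ≤ Nat.card {j : Fin k // I j = I i} :=
    card_image_le.trans_eq (by rw [Nat.card_eq_fintype_card, Fintype.card_subtype])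
  obtain ⟨P, δ, hfar, hsep⟩ := exists_separating_box_of_lt_GQuot (hbot i) Nat.card_pos
    (fun j hj => hlt.trans_le (Nat.sInf_le ⟨j, hj, rfl⟩)) E hE
  have := fun s => Ideal.finiteIndex (hbot s)
  refine IsExactCover.false_of_box_of_finiteIndex (H := fun s => (I s).toAddSubgroup) hcover i
    (P := P) ?_ δ (fun s hs => ?_) (fun s hs S hS h => ?_)
  · obtain ⟨p, hp, -⟩ := hfar j₀ hj₀
    exact ⟨p, hp⟩
  · rw [← Submodule.sup_toAddSubgroup]
    exact hfar s fun h => hs (h ▸ rfl)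
  · refine hsep S hS (α s - α i) (mem_image_of_mem _ ?_) ?_
    · simpa using Submodule.toAddSubgroup_injective hs
    · rw [← Submodule.mem_toAddSubgroup]
      convert h using 1
      abel

/-- In an exact covering system of the ring of integers of a number field in
which the ideals are not all equal, each modulus `I i` occurs at least
`min { G (I i / (I i + I j)) : I j ≠ I i }` times. -/
theorem exact_cover_modulus_repeats_ideal {K : Type*} [Field K] [NumberField K]
    {k : ℕ} (α : Fin k → 𝓞 K) (I : Fin k → Ideal (𝓞 K))
    (hbot : ∀ i, I i ≠ ⊥) (htop : ∀ i, I i ≠ ⊤)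
    (hcover : ∀ x : 𝓞 K, ∃! i : Fin k, x - α i ∈ I i)
    (hne : ∃ i j : Fin k, I i ≠ I j) :
    ∀ i : Fin k,
      sInf {m : ℕ | ∃ j : Fin k, I j ≠ I i ∧ m = GQuot (I i) (I i + I j)} ≤
        Nat.card {j : Fin k // I j = I i} :=
  exact_cover_modulus_repeats_ideal_general α I hbot hcover
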